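/- Let χ : ℝⁿ → ℝ be a kernel (satisfying (χ1), (χ2), (χ3) and m_0(χ) < ∞), and let f : ℝⁿ → ℝ be bounded and uniformly continuous on ℝⁿ. Then lim_{w → ∞} ‖S_w f − f‖_∞ = 0, i.e., lim_{w → ∞} sup_{x ∈ ℝⁿ} |(S_w f)(x) − f(x)| = 0. -/

import Mathlib

/-!
Since `∑ₖ χ(w x - k) = 1`, we have `S_w f x - f x = ∑ₖ χ(w x - k) (Aₖ - f x)`, where `Aₖ` is the
mean of `f` over the cell `R_k^w`. When `‖w x - k‖ ≤ ρ` the cell lies within `(√n + ρ) / w` of `x`,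
so uniform continuity makes `|Aₖ - f x| ≤ ε` and these terms contribute at most `ε m₀(χ)`. The other
terms are bounded by `2 ‖f‖_∞` and carry the weight `(‖w x - k‖ / ρ) ^ β ≥ 1`, so they contribute at
most `2 ‖f‖_∞ m_β(χ) / ρ ^ β`. With `ρ = w δ / 2` both bounds become small uniformly in `x`.
-/

open MeasureTheory Filter

noncomputable def latticePt (n : ℕ) (k : Fin n → ℤ) : EuclideanSpace ℝ (Fin n) :=
  WithLp.toLp 2 (fun i => (k i : ℝ))

/-- Discrete absolute moment of order `β`. -/
noncomputable def mom (n : ℕ) (χ : EuclideanSpace ℝ (Fin n) → ℝ) (β : ℝ) : ENNReal :=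
  ⨆ u : EuclideanSpace ℝ (Fin n), ∑' k : Fin n → ℤ,
    ENNReal.ofReal (|χ (u - latticePt n k)| * ‖u - latticePt n k‖ ^ β)

/-- The cell `R_k^w`. -/
def cell (n : ℕ) (w : ℝ) (k : Fin n → ℤ) : Set (EuclideanSpace ℝ (Fin n)) :=
  {u | ∀ i, u i ∈ Set.Icc ((k i : ℝ) / w) (((k i : ℝ) + 1) / w)}

/-- Sampling Kantorovich operator. -/
noncomputable def SK (n : ℕ) (χ f : EuclideanSpace ℝ (Fin n) → ℝ) (w : ℝ)
    (x : EuclideanSpace ℝ (Fin n)) : ℝ :=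
  ∑' k : Fin n → ℤ, χ (w • x - latticePt n k) * (w ^ n * ∫ u in cell n w k, f u)

open scoped Topology

lemma cell_eq_preimage_pi (n : ℕ) (w : ℝ) (k : Fin n → ℤ) :
    cell n w k = (MeasurableEquiv.toLp 2 (Fin n → ℝ)).symm ⁻¹'
      (Set.univ.pi fun i => Set.Icc ((k i : ℝ) / w) (((k i : ℝ) + 1) / w)) := by
  ext u
  simp only [cell, Set.mem_preimage, Set.mem_pi, Set.mem_univ, true_implies, Set.mem_ofPred_eq]
  rfl

lemma volume_cell (n : ℕ) {w : ℝ} (hw : 0 < w) (k : Fin n → ℤ) :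
    volume (cell n w k) = ENNReal.ofReal ((1 / w) ^ n) := by
  rw [cell_eq_preimage_pi, (EuclideanSpace.volume_preserving_symm_measurableEquiv_toLp
    (Fin n)).measure_preimage (MeasurableSet.univ_pi fun _ => measurableSet_Icc).nullMeasurableSet,
    volume_pi_pi]
  have side : ∀ i : Fin n,
      volume (Set.Icc ((k i : ℝ) / w) (((k i : ℝ) + 1) / w)) = ENNReal.ofReal (1 / w) := by
    intro i
    rw [Real.volume_Icc]
    congr 1
    ring
  simp only [side, Finset.prod_const, Finset.card_univ, Fintype.card_fin,
    ← ENNReal.ofReal_pow (one_div_pos.mpr hw).le]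

lemma volume_cell_lt_top (n : ℕ) {w : ℝ} (hw : 0 < w) (k : Fin n → ℤ) :
    volume (cell n w k) < ⊤ := by
  rw [volume_cell n hw k]
  exact ENNReal.ofReal_lt_top

lemma integrableOn_cell_of_bounded {n : ℕ} {w : ℝ} (hw : 0 < w) (k : Fin n → ℤ)
    {f : EuclideanSpace ℝ (Fin n) → ℝ} (hf : Measurable f) {B : ℝ} (hB : ∀ x, |f x| ≤ B) :
    IntegrableOn f (cell n w k) :=
  Measure.integrableOn_of_bounded (volume_cell_lt_top n hw k).ne hf.aestronglyMeasurable
    (ae_of_all _ hB)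

lemma norm_sub_inv_smul_latticePt_le_of_mem_cell {n : ℕ} {w : ℝ} (hw : 0 < w) {k : Fin n → ℤ}
    {u : EuclideanSpace ℝ (Fin n)} (hu : u ∈ cell n w k) :
    ‖u - w⁻¹ • latticePt n k‖ ≤ Real.sqrt n / w := by
  have coord : ∀ i, ‖(u - w⁻¹ • latticePt n k) i‖ ^ 2 ≤ (1 / w) ^ 2 := by
    intro i
    have hi : (u - w⁻¹ • latticePt n k) i = u i - (k i : ℝ) / w := by
      simp [latticePt, div_eq_inv_mul]
    obtain ⟨lo, hi'⟩ := hu i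
    rw [hi, Real.norm_eq_abs, sq_abs]
    have : (k i : ℝ) / w + 1 / w = ((k i : ℝ) + 1) / w := by ring
    apply sq_le_sq' <;> linarith
  calc ‖u - w⁻¹ • latticePt n k‖
      ≤ Real.sqrt (∑ _i : Fin n, (1 / w) ^ 2) := by
        rw [EuclideanSpace.norm_eq]
        exact Real.sqrt_le_sqrt (Finset.sum_le_sum fun i _ => coord i)
    _ = Real.sqrt n / w := by
        rw [Finset.sum_const, Finset.card_univ, Fintype.card_fin, nsmul_eq_mul,
          Real.sqrt_mul (Nat.cast_nonneg n), Real.sqrt_sq (one_div_pos.mpr hw).le]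
        ring

lemma norm_sub_le_of_mem_cell {n : ℕ} {w : ℝ} (hw : 0 < w) {k : Fin n → ℤ}
    {u : EuclideanSpace ℝ (Fin n)} (hu : u ∈ cell n w k) (x : EuclideanSpace ℝ (Fin n)) :
    ‖u - x‖ ≤ (Real.sqrt n + ‖w • x - latticePt n k‖) / w := by
  have hx : w⁻¹ • latticePt n k - x = w⁻¹ • (latticePt n k - w • x) := by
    rw [smul_sub, smul_smul, inv_mul_cancel₀ hw.ne', one_smul]
  calc ‖u - x‖ ≤ ‖u - w⁻¹ • latticePt n k‖ + ‖w⁻¹ • latticePt n k - x‖ :=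
        norm_sub_le_norm_sub_add_norm_sub _ _ _
    _ ≤ Real.sqrt n / w + ‖w • x - latticePt n k‖ / w := by
        gcongr
        · exact norm_sub_inv_smul_latticePt_le_of_mem_cell hw hu
        · rw [hx, norm_smul, norm_sub_rev, Real.norm_of_nonneg (inv_pos.mpr hw).le,
            inv_mul_eq_div]
    _ = _ := by ring

lemma abs_pow_mul_setIntegral_cell_sub_le {n : ℕ} {w : ℝ} (hw : 0 < w) {k : Fin n → ℤ}
    {f : EuclideanSpace ℝ (Fin n) → ℝ} (hf : IntegrableOn f (cell n w k))
    {c C : ℝ} (hC : ∀ u ∈ cell n w k, |f u - c| ≤ C) :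
    |w ^ n * (∫ u in cell n w k, f u) - c| ≤ C := by
  have hvol : volume.real (cell n w k) = (1 / w) ^ n := by
    rw [Measure.real, volume_cell n hw k, ENNReal.toReal_ofReal (by positivity)]
  have hscale : w ^ n * (1 / w) ^ n = 1 := by
    rw [← mul_pow, mul_one_div_cancel hw.ne', one_pow]
  have hmean : w ^ n * (∫ u in cell n w k, f u) - c = w ^ n * ∫ u in cell n w k, (f u - c) := by
    rw [integral_sub hf (integrableOn_const (volume_cell_lt_top n hw k).ne), setIntegral_const,
      hvol, smul_eq_mul, mul_sub, ← mul_assoc, hscale, one_mul]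
  have hbound : ‖∫ u in cell n w k, (f u - c)‖ ≤ C * (1 / w) ^ n := by
    rw [← hvol]
    exact norm_setIntegral_le_of_norm_le_const (volume_cell_lt_top n hw k) hC
  rw [hmean, abs_mul, abs_of_pos (pow_pos hw n)]
  calc w ^ n * |∫ u in cell n w k, (f u - c)| ≤ w ^ n * (C * (1 / w) ^ n) := by gcongr; exact hbound
    _ = C := by rw [mul_left_comm, hscale, mul_one]

section Moments

variable {n : ℕ} {χ : EuclideanSpace ℝ (Fin n) → ℝ} {β : ℝ}

lemma moment_term_nonneg (u : EuclideanSpace ℝ (Fin n)) (k : Fin n → ℤ) :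
    0 ≤ |χ (u - latticePt n k)| * ‖u - latticePt n k‖ ^ β :=
  mul_nonneg (abs_nonneg _) (Real.rpow_nonneg (norm_nonneg _) _)

lemma ofReal_tsum_le_mom (u : EuclideanSpace ℝ (Fin n)) :
    ∑' k : Fin n → ℤ, ENNReal.ofReal (|χ (u - latticePt n k)| * ‖u - latticePt n k‖ ^ β)
      ≤ mom n χ β :=
  le_iSup (fun u => ∑' k : Fin n → ℤ,
    ENNReal.ofReal (|χ (u - latticePt n k)| * ‖u - latticePt n k‖ ^ β)) u

lemma summable_of_mom_lt_top (h : mom n χ β < ⊤) (u : EuclideanSpace ℝ (Fin n)) :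
    Summable fun k : Fin n → ℤ => |χ (u - latticePt n k)| * ‖u - latticePt n k‖ ^ β := by
  have := ENNReal.summable_toReal ((ofReal_tsum_le_mom u).trans_lt h).ne
  simpa only [ENNReal.toReal_ofReal (moment_term_nonneg u _)] using this

lemma tsum_le_toReal_mom (h : mom n χ β < ⊤) (u : EuclideanSpace ℝ (Fin n)) :
    ∑' k : Fin n → ℤ, |χ (u - latticePt n k)| * ‖u - latticePt n k‖ ^ β ≤ (mom n χ β).toReal := by
  rw [← ENNReal.toReal_ofReal (tsum_nonneg (moment_term_nonneg u)),
    ENNReal.ofReal_tsum_of_nonneg (moment_term_nonneg u) (summable_of_mom_lt_top h u)]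
  exact ENNReal.toReal_mono h.ne (ofReal_tsum_le_mom u)

end Moments

lemma abs_tsum_mul_le_of_near_far {ι : Type*} {a d r : ι → ℝ} {ε D ρ β : ℝ}
    (hε : 0 ≤ ε) (hρ : 0 < ρ) (hβ : 0 < β) (hr : ∀ i, 0 ≤ r i)
    (ha : Summable fun i => |a i|) (haβ : Summable fun i => |a i| * r i ^ β)
    (hnear : ∀ i, r i ≤ ρ → |d i| ≤ ε) (hfar : ∀ i, |d i| ≤ D) :
    |∑' i, a i * d i| ≤ ε * ∑' i, |a i| + D / ρ ^ β * ∑' i, |a i| * r i ^ β := by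
  have hρβ : 0 < ρ ^ β := Real.rpow_pos_of_pos hρ β
  have hterm : ∀ i, |a i * d i| ≤ ε * |a i| + D / ρ ^ β * (|a i| * r i ^ β) := by
    intro i
    have hD : 0 ≤ D := (abs_nonneg _).trans (hfar i)
    have hfar_term : 0 ≤ D / ρ ^ β * (|a i| * r i ^ β) :=
      mul_nonneg (div_nonneg hD hρβ.le) (mul_nonneg (abs_nonneg _) (Real.rpow_nonneg (hr i) _))
    rw [abs_mul]
    rcases le_or_gt (r i) ρ with hi | hi
    · calc |a i| * |d i| ≤ |a i| * ε := by gcongr; exact hnear i hi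
        _ ≤ _ := by rw [mul_comm]; exact le_add_of_nonneg_right hfar_term
    · have hpow : ρ ^ β ≤ r i ^ β := Real.rpow_le_rpow hρ.le hi.le hβ.le
      calc |a i| * |d i| ≤ |a i| * D := by gcongr; exact hfar i
        _ = D / ρ ^ β * (|a i| * ρ ^ β) := by field_simp
        _ ≤ D / ρ ^ β * (|a i| * r i ^ β) := by gcongr
        _ ≤ _ := le_add_of_nonneg_left (mul_nonneg hε (abs_nonneg _))
  have hsum : Summable fun i => ε * |a i| + D / ρ ^ β * (|a i| * r i ^ β) :=
    (ha.mul_left ε).add (haβ.mul_left _)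
  have habs : Summable fun i => |a i * d i| := hsum.of_nonneg_of_le (fun _ => abs_nonneg _) hterm
  calc |∑' i, a i * d i| ≤ ∑' i, |a i * d i| := by
        have := norm_tsum_le_tsum_norm (f := fun i => a i * d i) (by simpa only [Real.norm_eq_abs])
        simpa only [Real.norm_eq_abs] using this
    _ ≤ ∑' i, (ε * |a i| + D / ρ ^ β * (|a i| * r i ^ β)) := habs.tsum_le_tsum hterm hsum
    _ = _ := by rw [(ha.mul_left ε).tsum_add (haβ.mul_left _), tsum_mul_left, tsum_mul_left]

lemma abs_SK_sub_le {n : ℕ} {χ f : EuclideanSpace ℝ (Fin n) → ℝ}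
    (hχ2 : ∀ y : EuclideanSpace ℝ (Fin n), ∑' k : Fin n → ℤ, χ (y - latticePt n k) = 1)
    {β : ℝ} (hβ : 0 < β) (hmβ : mom n χ β < ⊤) (hm0 : mom n χ 0 < ⊤)
    (hf : Measurable f) {B : ℝ} (hB : ∀ x, |f x| ≤ B)
    {w ρ ε : ℝ} (hw : 0 < w) (hρ : 0 < ρ) (hε : 0 ≤ ε) (x : EuclideanSpace ℝ (Fin n))
    (hfx : ∀ u, ‖u - x‖ ≤ (Real.sqrt n + ρ) / w → |f u - f x| ≤ ε) :
    |SK n χ f w x - f x| ≤ ε * (mom n χ 0).toReal + 2 * B / ρ ^ β * (mom n χ β).toReal := by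
  set a : (Fin n → ℤ) → ℝ := fun k => χ (w • x - latticePt n k)
  set I : (Fin n → ℤ) → ℝ := fun k => w ^ n * ∫ u in cell n w k, f u
  have hfint : ∀ k, IntegrableOn f (cell n w k) := fun k => integrableOn_cell_of_bounded hw k hf hB
  have hI : ∀ k, |I k| ≤ B := fun k => by
    simpa only [sub_zero] using abs_pow_mul_setIntegral_cell_sub_le hw (hfint k) (c := 0)
      fun u _ => by simpa only [sub_zero] using hB u
  have hfar : ∀ k, |I k - f x| ≤ 2 * B := fun k =>
    abs_pow_mul_setIntegral_cell_sub_le hw (hfint k) fun u _ =>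
      (abs_sub _ _).trans (by linarith [hB u, hB x])
  have hnear : ∀ k, ‖w • x - latticePt n k‖ ≤ ρ → |I k - f x| ≤ ε := fun k hk =>
    abs_pow_mul_setIntegral_cell_sub_le hw (hfint k) fun u hu =>
      hfx u ((norm_sub_le_of_mem_cell hw hu x).trans (by gcongr))
  have ha : Summable fun k => |a k| := by
    simpa only [Real.rpow_zero, mul_one] using summable_of_mom_lt_top hm0 (w • x)
  have ha_le : ∑' k, |a k| ≤ (mom n χ 0).toReal := by
    simpa only [Real.rpow_zero, mul_one] using tsum_le_toReal_mom hm0 (w • x)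
  have hSK : SK n χ f w x - f x = ∑' k, a k * (I k - f x) := by
    have hsum_fx : ∑' k, a k * f x = f x := by rw [tsum_mul_right, hχ2, one_mul]
    have haI : Summable fun k => a k * I k :=
      Summable.of_norm_bounded (ha.mul_right B) fun k => by
        rw [Real.norm_eq_abs, abs_mul]; gcongr; exact hI k
    calc SK n χ f w x - f x = ∑' k, a k * I k - ∑' k, a k * f x := by rw [hsum_fx]; rfl
      _ = _ := by rw [← haI.tsum_sub (ha.of_abs.mul_right (f x))]; simp only [mul_sub]
  rw [hSK]
  refine (abs_tsum_mul_le_of_near_far hε hρ hβ (fun _ => norm_nonneg _) ha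
    (summable_of_mom_lt_top hmβ (w • x)) hnear hfar).trans ?_
  have hB0 : 0 ≤ B := (abs_nonneg _).trans (hB x)
  gcongr
  exact tsum_le_toReal_mom hmβ (w • x)

theorem tendstoUniformly_SK {n : ℕ} {χ f : EuclideanSpace ℝ (Fin n) → ℝ}
    (hχ2 : ∀ y : EuclideanSpace ℝ (Fin n), ∑' k : Fin n → ℤ, χ (y - latticePt n k) = 1)
    {β : ℝ} (hβ : 0 < β) (hmβ : mom n χ β < ⊤) (hm0 : mom n χ 0 < ⊤)
    (hf : Measurable f) {B : ℝ} (hB : ∀ x, |f x| ≤ B) (hfuc : UniformContinuous f) :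
    TendstoUniformly (SK n χ f) f atTop := by
  rw [Metric.tendstoUniformly_iff]
  intro ε hε
  set M0 := (mom n χ 0).toReal
  have hM0 : 0 ≤ M0 := ENNReal.toReal_nonneg
  set ε' := ε / (2 * (M0 + 1))
  have hε' : 0 < ε' := by positivity
  have hε'M0 : ε' * M0 < ε / 2 := by
    rw [div_mul_eq_mul_div, div_lt_iff₀ (by positivity)]
    nlinarith
  obtain ⟨δ, hδ, hδf⟩ := Metric.uniformContinuous_iff.mp hfuc ε' hε'
  have hρ : Tendsto (fun w : ℝ => w * δ / 2) atTop atTop :=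
    tendsto_id.atTop_mul_const (by positivity) |>.atTop_div_const two_pos
  have htail : Tendsto (fun w : ℝ => 2 * B / (w * δ / 2) ^ β * (mom n χ β).toReal) atTop (𝓝 0) := by
    simpa using (tendsto_const_nhds.div_atTop ((tendsto_rpow_atTop hβ).comp hρ)).mul_const
      (mom n χ β).toReal
  have hmesh : Tendsto (fun w : ℝ => Real.sqrt n / w) atTop (𝓝 0) :=
    tendsto_const_nhds.div_atTop tendsto_id
  filter_upwards [eventually_gt_atTop 0, htail.eventually (gt_mem_nhds (half_pos hε)),
    hmesh.eventually (gt_mem_nhds (half_pos hδ))] with w hw htail_w hmesh_w x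
  have hfx : ∀ u, ‖u - x‖ ≤ (Real.sqrt n + w * δ / 2) / w → |f u - f x| ≤ ε' := by
    intro u hu
    have hlt : dist u x < δ := by
      rw [dist_eq_norm]
      refine hu.trans_lt ?_
      rw [add_div, mul_div_assoc, mul_div_cancel_left₀ _ hw.ne']
      linarith
    exact (hδf hlt).le
  rw [dist_comm, Real.dist_eq]
  calc |SK n χ f w x - f x| ≤ ε' * M0 + 2 * B / (w * δ / 2) ^ β * (mom n χ β).toReal :=
        abs_SK_sub_le hχ2 hβ hmβ hm0 hf hB hw (by positivity) hε'.le x hfx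
    _ < ε := by linarith

lemma tendsto_iSup_ofReal_abs_sub_of_tendstoUniformly {ι α : Type*} {l : Filter ι}
    {F : ι → α → ℝ} {f : α → ℝ} (h : TendstoUniformly F f l) :
    Tendsto (fun i => ⨆ x, ENNReal.ofReal |F i x - f x|) l (𝓝 0) := by
  rw [ENNReal.tendsto_nhds_zero]
  intro ε hε
  filter_upwards [EMetric.tendstoUniformly_iff.mp h ε hε] with i hi
  refine iSup_le fun x => ?_
  rw [← Real.dist_eq, ← edist_dist, edist_comm]
  exact (hi x).le

theorem stmt1_general (n : ℕ) (χ f : EuclideanSpace ℝ (Fin n) → ℝ)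
    (hχ2 : ∀ y : EuclideanSpace ℝ (Fin n), ∑' k : Fin n → ℤ, χ (y - latticePt n k) = 1)
    (hχ3 : ∃ β > (0:ℝ), mom n χ β < ⊤)
    (hχ0 : mom n χ 0 < ⊤)
    (hfmeas : Measurable f) (hfbd : ∃ B : ℝ, ∀ x, |f x| ≤ B)
    (hfuc : UniformContinuous f) :
    Tendsto (fun w : ℝ => ⨆ x : EuclideanSpace ℝ (Fin n),
      ENNReal.ofReal |SK n χ f w x - f x|) atTop (nhds 0) := by
  obtain ⟨β, hβ, hmβ⟩ := hχ3
  obtain ⟨B, hB⟩ := hfbd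
  exact tendsto_iSup_ofReal_abs_sub_of_tendstoUniformly
    (tendstoUniformly_SK hχ2 hβ hmβ hχ0 hfmeas hB hfuc)

theorem stmt1 (n : ℕ) (χ f : EuclideanSpace ℝ (Fin n) → ℝ)
    (hχmeas : Measurable χ)
    (hχ1 : Integrable χ)
    (hχbd : ∃ δ > (0:ℝ), ∃ M : ℝ, ∀ x : EuclideanSpace ℝ (Fin n), ‖x‖ ≤ δ → |χ x| ≤ M)
    (hχ2 : ∀ y : EuclideanSpace ℝ (Fin n), ∑' k : Fin n → ℤ, χ (y - latticePt n k) = 1)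
    (hχ3 : ∃ β > (0:ℝ), mom n χ β < ⊤)
    (hχ0 : mom n χ 0 < ⊤)
    (hfmeas : Measurable f) (hfbd : ∃ B : ℝ, ∀ x, |f x| ≤ B)
    (hfuc : UniformContinuous f) :
    Tendsto (fun w : ℝ => ⨆ x : EuclideanSpace ℝ (Fin n),
      ENNReal.ofReal |SK n χ f w x - f x|) atTop (nhds 0) :=
  stmt1_general n χ f hχ2 hχ3 hχ0 hfmeas hfbd hfuc
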